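/- Let (x_k) be a bounded sequence in a Banach space X. Then δ((x_k)) equals the diameter (in the norm of X**) of the set of all weak* cluster points of (x_k) in the bidual X**, where X is canonically embedded in X**. -/

import Mathlib

/-!
For a functional `f` in the unit ball, `inf_n diam {f (x_k) : k ≥ n}` is the distance between the
limsup and the liminf of `f (x_k)`, the two extreme cluster points of that real sequence. Weak*
cluster points `F` of `(x_k)` evaluate to cluster points `F f` of `f (x_k)`, and by Banach–Alaoglu
every cluster point of `f (x_k)` arises this way. Hence both `δ` and the diameter of the cluster
set are the supremum over unit functionals `f` of the spread of the cluster points of `f (x_k)`.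
-/

open Filter Metric Topology Pointwise NormedSpace

set_option maxHeartbeats 1000000
set_option synthInstance.maxHeartbeats 400000

noncomputable section

/-- `ca (x_k) = inf_n diam {x_k : k ≥ n}`: measures how far `(x_k)` is from being norm Cauchy. -/
def ca {Z : Type*} [NormedAddCommGroup Z] (x : ℕ → Z) : ℝ :=
  ⨅ n : ℕ, Metric.diam (x '' Set.Ici n)

/-- `δ (x_k) = sup_{f ∈ B_{Z*}} inf_n diam {f (x_k) : k ≥ n}`: measures how far `(x_k)` is from
being weakly Cauchy. -/
def qdelta {Z : Type*} [NormedAddCommGroup Z] [NormedSpace ℝ Z] (x : ℕ → Z) : ℝ :=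
  ⨆ f : Metric.closedBall (0 : StrongDual ℝ Z) 1,
    ⨅ n : ℕ, Metric.diam ((fun k => (f : StrongDual ℝ Z) (x k)) '' Set.Ici n)

open Bornology Set

section ca

variable {Z : Type*} [NormedAddCommGroup Z]

lemma ca_nonneg (u : ℕ → Z) : 0 ≤ ca u :=
  le_ciInf fun _ => diam_nonneg

lemma ca_le_diam_image_Ici (u : ℕ → Z) (n : ℕ) : ca u ≤ diam (u '' Ici n) :=
  ciInf_le ⟨0, forall_mem_range.2 fun _ => diam_nonneg⟩ n

lemma ca_le_of_forall_norm_le {u : ℕ → Z} {M : ℝ} (hM : ∀ k, ‖u k‖ ≤ M) : ca u ≤ 2 * M := by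
  have hsub : u '' Ici 0 ⊆ closedBall 0 M := by
    rintro _ ⟨k, -, rfl⟩
    simpa using hM k
  calc ca u ≤ diam (u '' Ici 0) := ca_le_diam_image_Ici u 0
    _ ≤ diam (closedBall (0 : Z) M) := diam_mono hsub isBounded_closedBall
    _ ≤ 2 * M := diam_closedBall ((norm_nonneg _).trans (hM 0))

lemma dist_le_ca_of_mapClusterPt {u : ℕ → Z} (hu : IsBounded (range u)) {a b : Z}
    (ha : MapClusterPt a atTop u) (hb : MapClusterPt b atTop u) : dist a b ≤ ca u := by
  refine le_ciInf fun n => ?_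
  rw [← diam_closure]
  exact dist_le_diam_of_mem (hu.subset (image_subset_range u _)).closure
    (mapClusterPt_atTop_iff_forall_mem_closure.1 ha n)
    (mapClusterPt_atTop_iff_forall_mem_closure.1 hb n)

end ca

lemma Real.ca_le_limsup_sub_liminf {u : ℕ → ℝ} (hu : IsBounded (range u)) :
    ca u ≤ limsup u atTop - liminf u atTop := by
  have hbl : IsBoundedUnder (· ≤ ·) atTop u := hu.bddAbove.isBoundedUnder_of_range
  have hbg : IsBoundedUnder (· ≥ ·) atTop u := hu.bddBelow.isBoundedUnder_of_range
  refine le_of_forall_pos_le_add fun ε hε => ?_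
  obtain ⟨N, hN⟩ := eventually_atTop.1 <|
    (eventually_lt_of_limsup_lt (lt_add_of_pos_right _ (half_pos hε)) hbl).and
      (eventually_lt_of_lt_liminf (sub_lt_self _ (half_pos hε)) hbg)
  have hsub : u '' Ici N ⊆ Icc (liminf u atTop - ε / 2) (limsup u atTop + ε / 2) := by
    rintro _ ⟨k, hk, rfl⟩
    exact ⟨(hN k hk).2.le, (hN k hk).1.le⟩
  calc ca u ≤ diam (u '' Ici N) := ca_le_diam_image_Ici u N
    _ ≤ diam (Icc (liminf u atTop - ε / 2) (limsup u atTop + ε / 2)) :=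
      diam_mono hsub (isBounded_Icc _ _)
    _ = limsup u atTop - liminf u atTop + ε := by
      rw [Real.diam_Icc (by linarith [liminf_le_limsup hbl hbg])]
      ring

lemma Real.exists_mapClusterPt_ca_le_dist {u : ℕ → ℝ} (hu : IsBounded (range u)) :
    ∃ a b, MapClusterPt a atTop u ∧ MapClusterPt b atTop u ∧ ca u ≤ dist a b :=
  ⟨limsup u atTop, liminf u atTop,
    MapClusterPt.limsup hu.bddBelow.isBoundedUnder_of_range.isCoboundedUnder_flip
      hu.bddAbove.isBoundedUnder_of_range,
    MapClusterPt.liminf hu.bddAbove.isBoundedUnder_of_range.isCoboundedUnder_flip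
      hu.bddBelow.isBoundedUnder_of_range,
    (Real.ca_le_limsup_sub_liminf hu).trans (le_abs_self _)⟩

section Dual

variable {X : Type*} [NormedAddCommGroup X] [NormedSpace ℝ X] {x : ℕ → X}

lemma bddAbove_range_ca_apply {M : ℝ} (hM : ∀ k, ‖x k‖ ≤ M) :
    BddAbove (range fun f : closedBall (0 : StrongDual ℝ X) 1 =>
      ca fun k => (f : StrongDual ℝ X) (x k)) :=
  ⟨2 * (1 * M), forall_mem_range.2 fun f => ca_le_of_forall_norm_le fun k =>
    (f : StrongDual ℝ X).le_of_opNorm_le_of_le (mem_closedBall_zero_iff.1 f.2) (hM k)⟩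

lemma qdelta_nonneg {M : ℝ} (hM : ∀ k, ‖x k‖ ≤ M) : 0 ≤ qdelta x :=
  (ca_nonneg _).trans (le_ciSup (bddAbove_range_ca_apply hM) ⟨0, mem_closedBall_self zero_le_one⟩)

lemma isBounded_range_apply (hx : IsBounded (range x)) (f : StrongDual ℝ X) :
    IsBounded (range fun k => f (x k)) := by
  have h := f.lipschitz.isBounded_image hx
  rwa [← range_comp] at h

def weakStarClusterPts (x : ℕ → X) : Set (StrongDual ℝ (StrongDual ℝ X)) :=
  {F | MapClusterPt (X := WeakDual ℝ (StrongDual ℝ X)) F atTop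
    (fun k => inclusionInDoubleDual ℝ X (x k))}

lemma mapClusterPt_apply_of_mem_weakStarClusterPts {F : StrongDual ℝ (StrongDual ℝ X)}
    (hF : F ∈ weakStarClusterPts x) (f : StrongDual ℝ X) :
    MapClusterPt (F f) atTop fun k => f (x k) :=
  hF.continuousAt_comp (WeakDual.eval_continuous f).continuousAt

lemma weakStarClusterPts_subset_closedBall {M : ℝ} (hM : ∀ k, ‖x k‖ ≤ M) :
    weakStarClusterPts x ⊆ closedBall 0 M := fun _ hF =>
  (WeakDual.isClosed_closedBall 0 M).mem_of_mapClusterPt hF <| .of_forall fun k =>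
    mem_closedBall_zero_iff.2 <| (double_dual_bound ℝ X (x k)).trans (hM k)

lemma isBounded_weakStarClusterPts (hx : IsBounded (range x)) :
    IsBounded (weakStarClusterPts x) := by
  obtain ⟨M, hM⟩ := hx.exists_norm_le
  exact isBounded_closedBall.subset
    (weakStarClusterPts_subset_closedBall fun k => hM _ (mem_range_self k))

/-- Banach–Alaoglu: along an ultrafilter realising the cluster point `a`, the bounded sequence
`(x_k)` converges weak* in `X**`. -/
lemma exists_mem_weakStarClusterPts_apply_eq (hx : IsBounded (range x)) {f : StrongDual ℝ X}
    {a : ℝ} (ha : MapClusterPt a atTop fun k => f (x k)) :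
    ∃ F ∈ weakStarClusterPts x, F f = a := by
  obtain ⟨M, hM⟩ := hx.exists_norm_le
  obtain ⟨U, hU, hUa⟩ := mapClusterPt_iff_ultrafilter.1 ha
  set J : ℕ → WeakDual ℝ (StrongDual ℝ X) := fun k => inclusionInDoubleDual ℝ X (x k)
  have hJ : ∀ k, J k ∈ WeakDual.toStrongDual ⁻¹' closedBall 0 M := fun k =>
    (mem_closedBall_zero_iff (E := StrongDual ℝ (StrongDual ℝ X))).2 <|
      (double_dual_bound ℝ X (x k)).trans (hM _ (mem_range_self k))
  obtain ⟨F, -, hUJ⟩ := (WeakDual.isCompact_closedBall (𝕜 := ℝ) 0 M).ultrafilter_le_nhds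
    (U.map J) (le_principal_iff.2 <| mem_map.2 <| univ_mem' hJ)
  have hJF : Tendsto J U (𝓝 F) := hUJ
  refine ⟨F, mapClusterPt_iff_ultrafilter.2 ⟨U, hU, hJF⟩, tendsto_nhds_unique ?_ hUa⟩
  exact ((WeakDual.eval_continuous f).tendsto F).comp hJF

end Dual

theorem qdelta_eq_diam_weakStar_cluster_points {X : Type*}
    [NormedAddCommGroup X] [NormedSpace ℝ X]
    (x : ℕ → X) (hx : ∃ M : ℝ, ∀ k, ‖x k‖ ≤ M) :
    qdelta x = Metric.diam {F : StrongDual ℝ (StrongDual ℝ X) |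
      MapClusterPt (X := WeakDual ℝ (StrongDual ℝ X)) F atTop
        (fun k => NormedSpace.inclusionInDoubleDual ℝ X (x k))} := by
  obtain ⟨M, hM⟩ := hx
  have hxb : IsBounded (range x) := isBounded_iff_forall_norm_le.2 ⟨M, forall_mem_range.2 hM⟩
  change qdelta x = diam (weakStarClusterPts x)
  apply le_antisymm
  · refine ciSup_le fun ⟨f, hf⟩ => ?_
    obtain ⟨a, b, ha, hb, hab⟩ := Real.exists_mapClusterPt_ca_le_dist (isBounded_range_apply hxb f)
    obtain ⟨F, hF, rfl⟩ := exists_mem_weakStarClusterPts_apply_eq hxb ha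
    obtain ⟨G, hG, rfl⟩ := exists_mem_weakStarClusterPts_apply_eq hxb hb
    calc ca _ ≤ ‖(F - G) f‖ := hab
      _ ≤ ‖F - G‖ := (F - G).unit_le_opNorm f (mem_closedBall_zero_iff.1 hf)
      _ = dist F G := (dist_eq_norm F G).symm
      _ ≤ diam _ := dist_le_diam_of_mem (isBounded_weakStarClusterPts hxb) hF hG
  · refine diam_le_of_forall_dist_le (qdelta_nonneg hM) fun F hF G hG =>
      (dist_eq_norm F G).trans_le <|
        ContinuousLinearMap.opNorm_le_of_unit_norm (qdelta_nonneg hM) fun f hf => ?_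
    calc ‖(F - G) f‖ = dist (F f) (G f) := rfl
      _ ≤ ca fun k => f (x k) := dist_le_ca_of_mapClusterPt (isBounded_range_apply hxb f)
          (mapClusterPt_apply_of_mem_weakStarClusterPts hF f)
          (mapClusterPt_apply_of_mem_weakStarClusterPts hG f)
      _ ≤ _ := le_ciSup (bddAbove_range_ca_apply hM) ⟨f, mem_closedBall_zero_iff.2 hf.le⟩
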